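/- Let E be a Hilbert C*-module over a unital C*-algebra A, and let T, S be bounded adjointable self-adjoint operators on E. For x ∈ E with ⟨x,x⟩ = 1, Δ_x(S)²·d_x(T)² + Δ_x(T)²·d_x(S)² ≥ (1/2)[(⟨{T,S}x,x⟩ − {⟨Tx,x⟩,⟨Sx,x⟩})² − (⟨[T,S]x,x⟩ + [⟨Tx,x⟩,⟨Sx,x⟩])²], an inequality of self-adjoint elements of A (noncommutative Heisenberg–Robertson–Schrödinger uncertainty principle, modular form). -/

import Mathlib

/-!
Centre `T x` and `S x` at `x`: put `u = T x - x <• ⟪T x, x⟫` and `v = S x - x <• ⟪S x, x⟫`.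
Since `⟪x, x⟫ = 1` and `T`, `S` are symmetric, `⟪u, u⟫ = d_x(T)²`, `⟪v, v⟫ = d_x(S)²`, and the two
bracketed expressions are `⟪u, v⟫ + ⟪v, u⟫` and `⟪v, u⟫ - ⟪u, v⟫`. Hence the left-hand side is
`⟪u, v⟫ ⟪v, u⟫ + ⟪v, u⟫ ⟪u, v⟫`, and each summand is bounded by the C⋆-module Cauchy–Schwarz
inequality `⟪v, u⟫ ⟪u, v⟫ ≤ ‖u‖² ⟪v, v⟫`.
-/

open scoped RightActions

/-- The December 2024 Mathlib `CStarModule` (right `Aᵐᵒᵖ`-action, inner product `A`-linear on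
the right), restated here because Mathlib's `CStarModule` now uses a left `A`-action. -/
class CStarModuleRight (A : outParam <| Type*) (E : Type*) [NonUnitalSemiring A] [StarRing A]
    [Module ℂ A] [AddCommGroup E] [Module ℂ E] [PartialOrder A] [SMul Aᵐᵒᵖ E] [Norm A] [Norm E]
    extends Inner A E where
  inner_add_right {x} {y} {z} : inner x (y + z) = inner x y + inner x z
  inner_self_nonneg {x} : 0 ≤ inner x x
  inner_self {x} : inner x x = 0 ↔ x = 0
  inner_op_smul_right {a : A} {x y : E} : inner x (y <• a) = inner x y * a
  inner_smul_right_complex {z : ℂ} {x} {y} : inner x (z • y) = z • inner x y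
  star_inner x y : star (inner x y) = inner y x
  norm_eq_sqrt_norm_inner_self x : ‖x‖ = Real.sqrt ‖inner x x‖

variable {A E : Type*} [CStarAlgebra A] [PartialOrder A] [StarOrderedRing A]
  [AddCommGroup E] [Module ℂ E] [SMul Aᵐᵒᵖ E] [Norm E] [CStarModuleRight A E]

local notation "⟪" x ", " y "⟫" => (inner A x y : A)

namespace CStarModuleRight

lemma inner_add_left {x y z : E} : ⟪x + y, z⟫ = ⟪x, z⟫ + ⟪y, z⟫ := by
  rw [← star_inner z, inner_add_right, star_add, star_inner, star_inner]

lemma inner_sub_right {x y z : E} : ⟪x, y - z⟫ = ⟪x, y⟫ - ⟪x, z⟫ :=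
  eq_sub_of_add_eq (by rw [← inner_add_right, sub_add_cancel])

lemma inner_sub_left {x y z : E} : ⟪x - y, z⟫ = ⟪x, z⟫ - ⟪y, z⟫ :=
  eq_sub_of_add_eq (by rw [← inner_add_left, sub_add_cancel])

lemma inner_zero_right {x : E} : ⟪x, 0⟫ = 0 := by
  simpa using (inner_sub_right (A := A) (x := x) (y := 0) (z := 0))

lemma inner_op_smul_left {a : A} {x y : E} : ⟪x <• a, y⟫ = star a * ⟪x, y⟫ := by
  rw [← star_inner y, inner_op_smul_right, star_mul, star_inner]

lemma inner_smul_right_real {r : ℝ} {x y : E} : ⟪x, r • y⟫ = r • ⟪x, y⟫ := by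
  rw [← Complex.coe_smul, inner_smul_right_complex, Complex.coe_smul]

lemma inner_smul_left_real {r : ℝ} {x y : E} : ⟪r • x, y⟫ = r • ⟪x, y⟫ := by
  rw [← star_inner y, inner_smul_right_real, star_smul, star_trivial, star_inner]

lemma norm_sq_eq_norm_inner_self (x : E) : ‖x‖ ^ 2 = ‖⟪x, x⟫‖ := by
  rw [norm_eq_sqrt_norm_inner_self (A := A), Real.sq_sqrt (norm_nonneg _)]

lemma inner_mul_inner_self_mul_inner_le (x y : E) :
    ⟪y, x⟫ * ⟪x, x⟫ * ⟪x, y⟫ ≤ ‖x‖ ^ 2 • (⟪y, x⟫ * ⟪x, y⟫) := by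
  rw [← star_inner x y]
  calc star ⟪x, y⟫ * ⟪x, x⟫ * ⟪x, y⟫ ≤ ‖⟪x, x⟫‖ • (star ⟪x, y⟫ * ⟪x, y⟫) :=
        CStarAlgebra.star_left_conjugate_le_norm_smul (hb := star_inner x x)
    _ = ‖x‖ ^ 2 • (star ⟪x, y⟫ * ⟪x, y⟫) := by rw [norm_sq_eq_norm_inner_self]

lemma inner_mul_inner_swap_le (x y : E) : ⟪y, x⟫ * ⟪x, y⟫ ≤ ‖x‖ ^ 2 • ⟪y, y⟫ := by
  rcases eq_or_ne x 0 with rfl | hx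
  · rw [inner_zero_right, zero_mul, norm_sq_eq_norm_inner_self, inner_zero_right, norm_zero,
      zero_smul]
  have hx_pos : 0 < ‖x‖ ^ 2 := by
    rw [norm_sq_eq_norm_inner_self]
    exact norm_pos_iff.mpr (mt inner_self.mp hx)
  -- expand `0 ≤ ⟪w, w⟫` for `w = x <• ⟪x, y⟫ - ‖x‖² • y`
  have key : 0 ≤ ‖x‖ ^ 2 • (⟪y, x⟫ * ⟪x, y⟫) - ‖x‖ ^ 2 • (⟪y, x⟫ * ⟪x, y⟫)
      - ‖x‖ ^ 2 • (⟪y, x⟫ * ⟪x, y⟫) + ‖x‖ ^ 2 • (‖x‖ ^ 2 • ⟪y, y⟫) :=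
    calc (0 : A) ≤ ⟪x <• ⟪x, y⟫ - ‖x‖ ^ 2 • y, x <• ⟪x, y⟫ - ‖x‖ ^ 2 • y⟫ := inner_self_nonneg
      _ = ⟪y, x⟫ * ⟪x, x⟫ * ⟪x, y⟫ - ‖x‖ ^ 2 • (⟪y, x⟫ * ⟪x, y⟫)
            - ‖x‖ ^ 2 • (⟪y, x⟫ * ⟪x, y⟫) + ‖x‖ ^ 2 • (‖x‖ ^ 2 • ⟪y, y⟫) := by
        simp only [inner_sub_right, inner_op_smul_right, inner_sub_left, inner_op_smul_left,
          inner_smul_left_real, inner_smul_right_real, star_inner, smul_sub, sub_mul,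
          smul_mul_assoc, mul_assoc]
        abel
      _ ≤ _ := by gcongr; exact inner_mul_inner_self_mul_inner_le x y
  rwa [sub_self, zero_sub, le_neg_add_iff_add_le, add_zero,
    smul_le_smul_iff_of_pos_left hx_pos] at key

lemma inner_sub_op_smul_inner_sub_op_smul {x : E} (hx : ⟪x, x⟫ = 1) (y z : E) :
    ⟪y - x <• ⟪x, y⟫, z - x <• ⟪x, z⟫⟫ = ⟪y, z⟫ - ⟪y, x⟫ * ⟪x, z⟫ := by
  simp only [inner_sub_left, inner_sub_right, inner_op_smul_left, inner_op_smul_right, hx,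
    star_inner]
  noncomm_ring

lemma inner_mul_inner_swap_add_le (u v : E) :
    ⟪u, v⟫ * ⟪v, u⟫ + ⟪v, u⟫ * ⟪u, v⟫ ≤ ‖v‖ ^ 2 • ⟪u, u⟫ + ‖u‖ ^ 2 • ⟪v, v⟫ :=
  add_le_add (inner_mul_inner_swap_le v u) (inner_mul_inner_swap_le u v)

end CStarModuleRight

lemma half_smul_sq_add_sub_sq_sub {R : Type*} [Ring R] [Module ℝ R] (a b : R) :
    (2 : ℝ)⁻¹ • ((a + b) ^ 2 - (b - a) ^ 2) = a * b + b * a := by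
  have h : (a + b) ^ 2 - (b - a) ^ 2 = (2 : ℝ) • (a * b + b * a) := by
    rw [two_smul]
    noncomm_ring
  rw [h, smul_smul, inv_mul_cancel₀ two_ne_zero, one_smul]

theorem noncommutative_HRS_modular_general
(T S : E →ₗ[ℂ] E)
    (hT : ∀ y z : E, ⟪T y, z⟫ = ⟪y, T z⟫) (hS : ∀ y z : E, ⟪S y, z⟫ = ⟪y, S z⟫)
    (x : E) (hx : ⟪x, x⟫ = 1) :
    (2 : ℝ)⁻¹ •
      ((⟪T (S x) + S (T x), x⟫ - (⟪T x, x⟫ * ⟪S x, x⟫ + ⟪S x, x⟫ * ⟪T x, x⟫)) ^ 2 -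
        (⟪T (S x) - S (T x), x⟫ + (⟪T x, x⟫ * ⟪S x, x⟫ - ⟪S x, x⟫ * ⟪T x, x⟫)) ^ 2) ≤
    (‖S x - x <• ⟪S x, x⟫‖ ^ 2 : ℝ) • (⟪T x, T x⟫ - ⟪T x, x⟫ ^ 2) +
      (‖T x - x <• ⟪T x, x⟫‖ ^ 2 : ℝ) • (⟪S x, S x⟫ - ⟪S x, x⟫ ^ 2) := by
  have hTx : ⟪T x, x⟫ = ⟪x, T x⟫ := hT x x
  have hSx : ⟪S x, x⟫ = ⟪x, S x⟫ := hS x x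
  have huv := CStarModuleRight.inner_sub_op_smul_inner_sub_op_smul hx (T x) (S x)
  have hvu := CStarModuleRight.inner_sub_op_smul_inner_sub_op_smul hx (S x) (T x)
  have huu := CStarModuleRight.inner_sub_op_smul_inner_sub_op_smul hx (T x) (T x)
  have hvv := CStarModuleRight.inner_sub_op_smul_inner_sub_op_smul hx (S x) (S x)
  simp only [← hTx, ← hSx] at huv hvu huu hvv
  set u := T x - x <• ⟪T x, x⟫
  set v := S x - x <• ⟪S x, x⟫
  calc _ = (2 : ℝ)⁻¹ • ((⟪u, v⟫ + ⟪v, u⟫) ^ 2 - (⟪v, u⟫ - ⟪u, v⟫) ^ 2) := by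
        rw [huv, hvu, CStarModuleRight.inner_add_left, CStarModuleRight.inner_sub_left,
          hT (S x), hS (T x)]
        congr 3 <;> abel
    _ = ⟪u, v⟫ * ⟪v, u⟫ + ⟪v, u⟫ * ⟪u, v⟫ := half_smul_sq_add_sub_sq_sub _ _
    _ ≤ ‖v‖ ^ 2 • ⟪u, u⟫ + ‖u‖ ^ 2 • ⟪v, v⟫ := CStarModuleRight.inner_mul_inner_swap_add_le u v
    _ = _ := by rw [huu, hvv, ← sq, ← sq]

/-- Noncommutative Heisenberg–Robertson–Schrödinger uncertainty principle, modular form. -/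
theorem noncommutative_HRS_modular
(T S : E →ₗ[ℂ] E)
    (hTA : ∀ (a : A) (y : E), T (y <• a) = T y <• a)
    (hSA : ∀ (a : A) (y : E), S (y <• a) = S y <• a)
    (hT : ∀ y z : E, ⟪T y, z⟫ = ⟪y, T z⟫) (hS : ∀ y z : E, ⟪S y, z⟫ = ⟪y, S z⟫)
    (hTb : ∃ C : ℝ, ∀ y : E, ‖T y‖ ≤ C * ‖y‖) (hSb : ∃ C : ℝ, ∀ y : E, ‖S y‖ ≤ C * ‖y‖)
    (x : E) (hx : ⟪x, x⟫ = 1) :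
    (2 : ℝ)⁻¹ •
      ((⟪T (S x) + S (T x), x⟫ - (⟪T x, x⟫ * ⟪S x, x⟫ + ⟪S x, x⟫ * ⟪T x, x⟫)) ^ 2 -
        (⟪T (S x) - S (T x), x⟫ + (⟪T x, x⟫ * ⟪S x, x⟫ - ⟪S x, x⟫ * ⟪T x, x⟫)) ^ 2) ≤
    (‖S x - x <• ⟪S x, x⟫‖ ^ 2 : ℝ) • (⟪T x, T x⟫ - ⟪T x, x⟫ ^ 2) +
      (‖T x - x <• ⟪T x, x⟫‖ ^ 2 : ℝ) • (⟪S x, S x⟫ - ⟪S x, x⟫ ^ 2) :=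
  noncommutative_HRS_modular_general T S hT hS x hx
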